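/- arXiv:2309.06346 — 3 statements merged into one kernel-verified Lean document; each statement's English description precedes it below -/
import Mathlib

section
/- The map φ(z) := −z/z² satisfies φ(T⁺) = T⁺ and φ(T⁻) = T⁻; in particular every z ∈ T⁺ ∪ T⁻ satisfies z² ≠ 0, so φ is defined there. -/
open Metric Set Complex Pointwise

noncomputable section

abbrev Cn (N : ℕ) := EuclideanSpace ℂ (Fin N)
abbrev Rn (N : ℕ) := EuclideanSpace ℝ (Fin N)

/-- The canonical embedding of `ℝⁿ` as the set of real points of `ℂⁿ`. -/
def emb {N : ℕ} (x : Rn N) : Cn N := WithLp.toLp 2 (fun i => (x i : ℂ))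

/-- Componentwise real part. -/
def reP {N : ℕ} (z : Cn N) : Rn N := WithLp.toLp 2 (fun i => (z i).re)

/-- Componentwise imaginary part. -/
def imP {N : ℕ} (z : Cn N) : Rn N := WithLp.toLp 2 (fun i => (z i).im)

/-- Complex Minkowski product `z·w = z₀w₀ - ∑_{i≥1} zᵢwᵢ`. -/
def minkC {N : ℕ} [NeZero N] (z w : Cn N) : ℂ := 2 * z 0 * w 0 - ∑ i, z i * w i

/-- Real Minkowski product `x·y = x₀y₀ - ∑_{i≥1} xᵢyᵢ`. -/
def minkR {N : ℕ} [NeZero N] (x y : Rn N) : ℝ := 2 * x 0 * y 0 - ∑ i, x i * y i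

/-- Forward light cone `V⁺`. -/
def Vplus {N : ℕ} [NeZero N] : Set (Rn N) := {x | 0 < minkR x x ∧ 0 < x 0}

/-- Backward light cone `V⁻ = -V⁺`. -/
def Vminus {N : ℕ} [NeZero N] : Set (Rn N) := {x | -x ∈ Vplus}

/-- Forward tube `T⁺ = ℝⁿ + iV⁺`. -/
def Tplus {N : ℕ} [NeZero N] : Set (Cn N) := {z | imP z ∈ Vplus}

/-- Backward tube `T⁻ = -T⁺`. -/
def Tminus {N : ℕ} [NeZero N] : Set (Cn N) := {z | -z ∈ Tplus}

/-- The Edge-of-the-Wedge complex neighborhood `B̃ = ⋃_{x ∈ B} {z : ‖z - x‖ < dist(x,∂B)/32}`. -/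
def tildeSet {N : ℕ} (B : Set (Rn N)) : Set (Cn N) :=
  ⋃ x ∈ B, {z : Cn N | dist z (emb x) < infDist x (frontier B) / 32}

/-- The transformation of reciprocal radii `φ(z) = -z / z²`. -/
def phi (z : Cn 2) : Cn 2 := WithLp.toLp 2 (fun i => -z i / minkC z z)

lemma minkC_eq (z : Cn 2) : minkC z z = z 0 ^ 2 - z 1 ^ 2 := by
  simp [minkC, Fin.sum_univ_two]; ring

lemma mem_Tplus (z : Cn 2) :
    z ∈ Tplus ↔ 0 < (z 0).im ^ 2 - (z 1).im ^ 2 ∧ 0 < (z 0).im := by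
  constructor <;> rintro ⟨h1, h2⟩ <;>
    refine ⟨?_, by simpa [imP] using h2⟩ <;>
    · simp only [Tplus, Vplus, imP, minkR, Fin.sum_univ_two, Set.mem_setOf_eq, PiLp.toLp_apply] at *
      nlinarith

lemma key (z : Cn 2) (hz : z ∈ Tplus) : minkC z z ≠ 0 ∧ phi z ∈ Tplus := by
  rw [mem_Tplus] at hz
  set x0 := (z 0).re with hx0; set x1 := (z 1).re
  set y0 := (z 0).im; set y1 := (z 1).im
  obtain ⟨hq, hy0⟩ := hz
  have ha : (minkC z z).re = x0 ^ 2 - y0 ^ 2 - x1 ^ 2 + y1 ^ 2 := by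
    rw [minkC_eq]; simp [pow_two, Complex.mul_re]; ring
  have hb : (minkC z z).im = 2 * x0 * y0 - 2 * x1 * y1 := by
    rw [minkC_eq]; simp [pow_two, Complex.mul_im]; ring
  have hne : minkC z z ≠ 0 := by
    intro h
    rw [h] at ha hb
    simp only [Complex.zero_re, Complex.zero_im] at ha hb
    have e1 : x0 * y0 = x1 * y1 := by linarith
    have e2 : x0 ^ 2 * y0 ^ 2 = x1 ^ 2 * y1 ^ 2 := by linear_combination (x0 * y0 + x1 * y1) * e1
    have e3 : (0:ℝ) = (x0 ^ 2 - y0 ^ 2 - x1 ^ 2 + y1 ^ 2) * y0 ^ 2 := by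
      rw [← ha]; ring
    nlinarith [e2, e3, mul_nonneg (sq_nonneg x1) hq.le,
      mul_pos (mul_pos hy0 hy0) hq]
  set a := (minkC z z).re
  set b := (minkC z z).im
  refine ⟨hne, ?_⟩
  have hd : 0 < Complex.normSq (minkC z z) := Complex.normSq_pos.2 hne
  have hdab : Complex.normSq (minkC z z) = a ^ 2 + b ^ 2 := by
    rw [Complex.normSq_apply]; ring
  set d := Complex.normSq (minkC z z) with hdd
  have him : ∀ i, (phi z i).im = (b * (z i).re - a * (z i).im) / d := by
    intro i
    simp [phi, Complex.div_im, d, PiLp.toLp_apply]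
    ring
  rw [mem_Tplus]
  have h0 : (phi z 0).im = (b * x0 - a * y0) / d := him 0
  have h1 : (phi z 1).im = (b * x1 - a * y1) / d := him 1
  rw [h0, h1]
  constructor
  · have hid : (b * x0 - a * y0) ^ 2 - (b * x1 - a * y1) ^ 2 = d * (y0 ^ 2 - y1 ^ 2) := by
      rw [hdab, ha, hb]; ring
    have : ((b * x0 - a * y0) / d) ^ 2 - ((b * x1 - a * y1) / d) ^ 2
        = (y0 ^ 2 - y1 ^ 2) / d := by
      rw [div_pow, div_pow, div_sub_div_same, hid, pow_two d]
      exact mul_div_mul_left _ _ (ne_of_gt hd)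
    rw [this]
    positivity
  · apply div_pos _ hd
    rw [ha, hb]
    nlinarith [mul_nonneg (sq_nonneg (x0 - x1)) (by nlinarith : (0:ℝ) ≤ y0 + y1),
      mul_nonneg (sq_nonneg (x0 + x1)) (by nlinarith : (0:ℝ) ≤ y0 - y1),
      mul_pos hy0 hq]

lemma minkC_neg (z : Cn 2) : minkC (-z) (-z) = minkC z z := by
  rw [minkC_eq, minkC_eq]; simp

lemma phi_neg (z : Cn 2) : phi (-z) = -phi z := by
  ext i
  simp [phi, minkC_neg, neg_div]

lemma phi_phi (z : Cn 2) (hz : minkC z z ≠ 0) : phi (phi z) = z := by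
  have hq : minkC (phi z) (phi z) = 1 / minkC z z := by
    rw [minkC_eq]
    simp only [phi, PiLp.toLp_apply]
    have h2 : (-z 0 / minkC z z) ^ 2 - (-z 1 / minkC z z) ^ 2
        = (z 0 ^ 2 - z 1 ^ 2) / (minkC z z) ^ 2 := by ring
    rw [h2, ← minkC_eq, pow_two, ← div_div, div_self hz]
  ext i
  rw [phi, hq]
  simp only [phi, PiLp.toLp_apply]
  field_simp

/-- Every point of `T⁺ ∪ T⁻` satisfies `z² ≠ 0` (so `φ` is defined there), and
`φ(T⁺) = T⁺`, `φ(T⁻) = T⁻`. -/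
theorem stmt9 :
    (∀ z ∈ (Tplus ∪ Tminus : Set (Cn 2)), minkC z z ≠ 0) ∧
    phi '' Tplus = Tplus ∧ phi '' Tminus = Tminus := by

  have hneg : ∀ z : Cn 2, z ∈ Tminus ↔ -z ∈ Tplus := fun z => Iff.rfl
  have hTm : ∀ z ∈ (Tminus : Set (Cn 2)), minkC z z ≠ 0 ∧ phi z ∈ Tminus := by
    intro z hz
    obtain ⟨h1, h2⟩ := key (-z) hz
    rw [minkC_neg] at h1
    refine ⟨h1, ?_⟩
    rw [hneg, ← phi_neg]
    exact h2
  refine ⟨?_, ?_, ?_⟩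
  · intro z hz
    rcases hz with hz | hz
    · exact (key z hz).1
    · exact (hTm z hz).1
  · apply Set.Subset.antisymm
    · rintro _ ⟨w, hw, rfl⟩
      exact (key w hw).2
    · intro z hz
      exact ⟨phi z, (key z hz).2, phi_phi z (key z hz).1⟩
  · apply Set.Subset.antisymm
    · rintro _ ⟨w, hw, rfl⟩
      exact (hTm w hw).2
    · intro z hz
      exact ⟨phi z, (hTm z hz).2, phi_phi z (hTm z hz).1⟩
end
end

section
/- Let m > 0. The map φ(z) := −z/z² maps the double cone D_{(−1/m,0),0} := ((−1/m, 0) + V⁺) ∩ V⁻ bijectively onto the shifted cone (m, 0) + V⁺; in particular every x ∈ D_{(−1/m,0),0} satisfies x² ≠ 0, so φ is defined there. -/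
open Metric Set Complex Pointwise

noncomputable section

/-! ### Auxiliary material -/

lemma minkR_eval (x y : Rn 2) : minkR x y = x 0 * y 0 - x 1 * y 1 := by
  simp [minkR, Fin.sum_univ_two]; ring

lemma minkC_eval (z w : Cn 2) : minkC z w = z 0 * w 0 - z 1 * w 1 := by
  simp [minkC, Fin.sum_univ_two]; ring

/-- The real version of `phi`. -/
def phiR (x : Rn 2) : Rn 2 := WithLp.toLp 2 (fun i => -x i / minkR x x)

lemma minkC_emb (x : Rn 2) : minkC (emb x) (emb x) = ((minkR x x : ℝ) : ℂ) := by
  rw [minkR_eval, minkC_eval]; push_cast; simp [emb]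

lemma phi_emb (x : Rn 2) : phi (emb x) = emb (phiR x) := by
  ext i
  rw [phi, minkC_emb]
  simp only [phi, phiR, emb, minkC_emb, PiLp.toLp_apply]
  push_cast
  ring

lemma core_fwd (m a b : ℝ) (hm : 0 < m)
    (h1 : 0 < (a + 1/m) * (a + 1/m) - b * b) (h2 : 0 < a + 1/m)
    (h3 : 0 < a * a - b * b) (h4 : 0 < -a) :
    0 < (-a/(a*a-b*b) - m) * (-a/(a*a-b*b) - m) - (-b/(a*a-b*b)) * (-b/(a*a-b*b))
    ∧ 0 < -a/(a*a-b*b) - m := by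
  have h1' : 0 < (m*a+1)*(m*a+1) - m*m*(b*b) := by
    have e : (m*a+1)*(m*a+1) - m*m*(b*b) = m*m*((a+1/m)*(a+1/m) - b*b) := by
      field_simp
    rw [e]; exact mul_pos (mul_pos hm hm) h1
  have hbb : 0 ≤ m * (b * b) := mul_nonneg hm.le (mul_self_nonneg b)
  have hma : 0 < m * a + 1 := by
    have h := mul_pos hm h2
    have hm1 : m * (1/m) = 1 := by field_simp
    nlinarith [h, hm1]
  have key : 0 < -a - m * (a*a-b*b) := by nlinarith [mul_pos h4 hma]
  constructor
  · rw [div_sub' (ne_of_gt h3), div_mul_div_comm, div_mul_div_comm,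
      div_sub_div_same]
    apply div_pos _ (by positivity)
    nlinarith [mul_pos h3 h1']
  · rw [sub_pos, lt_div_iff₀ h3]; linarith

lemma core_bwd (m a b : ℝ) (hm : 0 < m)
    (h1 : 0 < (a - m) * (a - m) - b * b) (h2 : 0 < a - m) :
    0 < a * a - b * b ∧
    0 < (-a/(a*a-b*b) + 1/m) * (-a/(a*a-b*b) + 1/m) - (-b/(a*a-b*b)) * (-b/(a*a-b*b))
    ∧ 0 < -a/(a*a-b*b) + 1/m
    ∧ 0 < a/(a*a-b*b) := by
  have ht : 0 < a * a - b * b := by nlinarith [mul_pos hm h2]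
  have ha : 0 < a := by linarith
  have key : 0 < (a*a-b*b) - m * a := by nlinarith [mul_pos hm h2]
  refine ⟨ht, ?_, ?_, div_pos ha ht⟩
  · have e : (-a/(a*a-b*b) + 1/m) * (-a/(a*a-b*b) + 1/m) - (-b/(a*a-b*b)) * (-b/(a*a-b*b))
        = (((a*a-b*b) - m*a)*((a*a-b*b)-m*a) - m*m*(b*b)) / (m*m*(a*a-b*b)*(a*a-b*b)) := by
      have := ht.ne'; have := hm.ne'; have : a ^ 2 - b ^ 2 ≠ 0 := by rw [sq, sq]; exact ht.ne'
      field_simp; ring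
    rw [e]
    apply div_pos _ (by positivity)
    nlinarith [mul_pos ht h1]
  · have e : -a/(a*a-b*b) + 1/m = ((a*a-b*b) - m*a)/(m*(a*a-b*b)) := by have := ht.ne'; have := hm.ne'; have : a ^ 2 - b ^ 2 ≠ 0 := (by rw [sq, sq]; exact ht.ne'); field_simp; ring
    rw [e]; positivity

lemma phiR_apply (x : Rn 2) (i : Fin 2) :
    phiR x i = -x i / (x 0 * x 0 - x 1 * x 1) := by
  rw [phiR, minkR_eval]

lemma phiR_phiR (x : Rn 2) (h : minkR x x ≠ 0) : phiR (phiR x) = x := by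
  have e := minkR_eval x x
  have hD : x 0 * x 0 - x 1 * x 1 ≠ 0 := by rwa [e] at h
  have hs : minkR (phiR x) (phiR x) = 1 / minkR x x := by
    rw [minkR_eval (phiR x) (phiR x), phiR_apply, phiR_apply, e]
    field_simp
    try ring
  ext i
  show -(phiR x i) / minkR (phiR x) (phiR x) = x i
  rw [hs]
  show -(-x i / minkR x x) / (1 / minkR x x) = x i
  field_simp

/-- For `m > 0`, every point of the double cone `D_{(-1/m,0),0} = ((-1/m,0) + V⁺) ∩ V⁻`
satisfies `x² ≠ 0`, and `φ` maps it bijectively onto `(m,0) + V⁺`. -/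
theorem stmt11 (m : ℝ) (hm : 0 < m)
    (c : Rn 2) (hc : c = WithLp.toLp 2 (fun i => if i = 0 then -1 / m else 0))
    (c' : Rn 2) (hc' : c' = WithLp.toLp 2 (fun i => if i = 0 then m else 0))
    (Dc : Set (Rn 2)) (hDc : Dc = {x | x - c ∈ Vplus ∧ -x ∈ Vplus}) :
    (∀ x ∈ Dc, minkR x x ≠ 0) ∧
    Set.BijOn phi (emb '' Dc) (emb '' {x : Rn 2 | x - c' ∈ Vplus}) := by
  have hc0 : c 0 = -1/m := by rw [hc]; norm_num
  have hc1 : c 1 = 0 := by rw [hc]; norm_num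
  have hc'0 : c' 0 = m := by rw [hc']; norm_num
  have hc'1 : c' 1 = 0 := by rw [hc']; norm_num
  clear hc hc'
  set S : Set (Rn 2) := {x : Rn 2 | x - c' ∈ Vplus} with hS
  have hsub : ∀ (x y : Rn 2) (i : Fin 2), (x - y) i = x i - y i := fun _ _ _ => rfl
  have hneg : ∀ (x : Rn 2) (i : Fin 2), (-x) i = -(x i) := fun _ _ => rfl
  have memD : ∀ x : Rn 2, x ∈ Dc ↔
      (0 < (x 0 + 1/m) * (x 0 + 1/m) - x 1 * x 1 ∧ 0 < x 0 + 1/m ∧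
       0 < x 0 * x 0 - x 1 * x 1 ∧ 0 < -x 0) := by
    intro x
    simp only [hDc, Set.mem_setOf_eq, Vplus, minkR_eval, hsub, hneg, hc0, hc1]
    ring_nf
    try tauto
  have memS : ∀ x : Rn 2, x ∈ S ↔
      (0 < (x 0 - m) * (x 0 - m) - x 1 * x 1 ∧ 0 < x 0 - m) := by
    intro x
    simp only [hS, Set.mem_setOf_eq, Vplus, minkR_eval, hsub, hc'0, hc'1]
    ring_nf
    try tauto
  -- forward direction
  have fwd : ∀ x ∈ Dc, 0 < minkR x x ∧ phiR x ∈ S := by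
    intro x hx
    rw [memD] at hx
    obtain ⟨h1, h2, h3, h4⟩ := hx
    have key := core_fwd m (x 0) (x 1) hm h1 h2 h3 h4
    refine ⟨by rw [minkR_eval]; exact h3, ?_⟩
    rw [memS, phiR_apply, phiR_apply]
    exact ⟨key.1, key.2⟩
  -- backward direction
  have bwd : ∀ y ∈ S, 0 < minkR y y ∧ phiR y ∈ Dc := by
    intro y hy
    rw [memS] at hy
    obtain ⟨h1, h2⟩ := hy
    have key := core_bwd m (y 0) (y 1) hm h1 h2
    refine ⟨by rw [minkR_eval]; exact key.1, ?_⟩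
    rw [memD, phiR_apply, phiR_apply]
    have e : -(-y 0 / (y 0 * y 0 - y 1 * y 1)) = y 0 / (y 0 * y 0 - y 1 * y 1) := by ring
    refine ⟨key.2.1, key.2.2.1, ?_, by rw [e]; exact key.2.2.2⟩
    · have hne : y 0 * y 0 - y 1 * y 1 ≠ 0 := ne_of_gt key.1
      have e2 : (-y 0 / (y 0 * y 0 - y 1 * y 1)) * (-y 0 / (y 0 * y 0 - y 1 * y 1))
          - (-y 1 / (y 0 * y 0 - y 1 * y 1)) * (-y 1 / (y 0 * y 0 - y 1 * y 1))
          = 1 / (y 0 * y 0 - y 1 * y 1) := by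
        field_simp
        try ring
      rw [e2]
      exact one_div_pos.mpr key.1
  constructor
  · exact fun x hx => (fwd x hx).1.ne'
  · have mapsTo₁ : Set.MapsTo phi (emb '' Dc) (emb '' S) := by
      rintro z ⟨x, hx, rfl⟩
      rw [phi_emb]
      exact ⟨phiR x, (fwd x hx).2, rfl⟩
    have mapsTo₂ : Set.MapsTo phi (emb '' S) (emb '' Dc) := by
      rintro z ⟨y, hy, rfl⟩
      rw [phi_emb]
      exact ⟨phiR y, (bwd y hy).2, rfl⟩
    refine Set.InvOn.bijOn ⟨?_, ?_⟩ mapsTo₁ mapsTo₂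
    · rintro z ⟨x, hx, rfl⟩
      rw [phi_emb, phi_emb, phiR_phiR x (fwd x hx).1.ne']
    · rintro z ⟨y, hy, rfl⟩
      rw [phi_emb, phi_emb, phiR_phiR y (bwd y hy).1.ne']
end
end

section
/- For z = x + iy ∈ ℂ² (x, y ∈ ℝ²), one has z² = 0 if and only if x·y = 0 and x² = y², and for real x, y these two conditions force x² = y² = 0. Consequently, for every m ≥ 0 and every z in Ṽ_m⁺ ∪ R̃ ∪ T⁺ ∪ T⁻ one has z² ≠ 0, where V_m⁺ := {x ∈ ℝ² : x² > m², x₀ > 0} and R := {x ∈ ℝ² : x² < 0}. -/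
open Metric Set Complex Pointwise

noncomputable section

lemma infDist_frontier_le_dist {E : Type*} [NormedAddCommGroup E] [NormedSpace ℝ E]
    {B : Set E} {x p : E} (hx : x ∈ B) (hp : p ∉ B) :
    infDist x (frontier B) ≤ dist x p := by
  by_contra hcon
  push_neg at hcon
  set r := infDist x (frontier B) with hr
  have hball : ∀ y ∈ ball x r, y ∉ frontier B := by
    intro y hy hf
    have h1 : r ≤ dist x y := infDist_le_dist_of_mem hf
    rw [mem_ball'] at hy
    linarith
  have hsub : ball x r ⊆ interior B ∪ interior Bᶜ := by
    intro y hy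
    have := hball y hy
    rw [← compl_frontier_eq_union_interior]
    exact this
  have hxb : x ∈ ball x r := by
    rw [mem_ball, dist_self]; exact dist_nonneg.trans_lt hcon
  have hpb : p ∈ ball x r := by rwa [mem_ball']
  have hxint : x ∈ interior B := by
    rw [← self_diff_frontier]
    exact ⟨hx, hball x hxb⟩
  have hpint : p ∈ interior Bᶜ := by
    rw [← self_diff_frontier]
    refine ⟨hp, fun h => hball p hpb ?_⟩
    rwa [frontier_compl] at h
  obtain ⟨y, _, hyu, hyv⟩ := (convex_ball x r).isPreconnected (interior B) (interior Bᶜ)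
    isOpen_interior isOpen_interior hsub ⟨x, hxb, hxint⟩ ⟨p, hpb, hpint⟩
  exact (interior_subset hyv) (interior_subset hyu)

lemma dist_reP_le {N : ℕ} (z : Cn N) (x : Rn N) : dist (reP z) x ≤ dist z (emb x) := by
  rw [EuclideanSpace.dist_eq, EuclideanSpace.dist_eq]
  apply Real.sqrt_le_sqrt
  apply Finset.sum_le_sum
  intro i _
  have h : dist (reP z i) (x i) ≤ dist (z i) (emb x i) := by
    simp only [reP, emb, PiLp.toLp_apply, Complex.dist_eq, Real.dist_eq]
    calc |(z i).re - x i| = |((z i) - (x i : ℂ)).re| := by simp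
    _ ≤ ‖(z i) - (x i : ℂ)‖ := Complex.abs_re_le_norm _
  exact pow_le_pow_left₀ dist_nonneg h 2

/-- In `ℂ²`: `z² = 0` iff `x·y = 0` and `x² = y²` (for `z = x + iy`), these conditions
force `x² = y² = 0`, and consequently `z² ≠ 0` on `Ṽ_m⁺ ∪ R̃ ∪ T⁺ ∪ T⁻` for `m ≥ 0`. -/
theorem stmt18 (m : ℝ) (hm : 0 ≤ m) :
    (∀ z : Cn 2, minkC z z = 0 ↔
        (minkR (reP z) (imP z) = 0 ∧ minkR (reP z) (reP z) = minkR (imP z) (imP z))) ∧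
    (∀ z : Cn 2, minkC z z = 0 →
        minkR (reP z) (reP z) = 0 ∧ minkR (imP z) (imP z) = 0) ∧
    (∀ z ∈ tildeSet {x : Rn 2 | m ^ 2 < minkR x x ∧ 0 < x 0}
            ∪ tildeSet {x : Rn 2 | minkR x x < 0} ∪ Tplus ∪ Tminus,
        minkC z z ≠ 0) := by
  have h1 : ∀ z : Cn 2, minkC z z = 0 ↔
      (minkR (reP z) (imP z) = 0 ∧ minkR (reP z) (reP z) = minkR (imP z) (imP z)) := by
    intro z
    simp only [minkC, minkR, reP, imP, PiLp.toLp_apply, Fin.sum_univ_two, Complex.ext_iff, Complex.zero_re,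
      Complex.zero_im, Complex.sub_re, Complex.sub_im, Complex.mul_re, Complex.mul_im,
      Complex.add_re, Complex.add_im, Complex.re_ofNat, Complex.im_ofNat]
    constructor
    · rintro ⟨ha, hb⟩
      constructor <;> nlinarith [ha, hb]
    · rintro ⟨ha, hb⟩
      constructor <;> nlinarith [ha, hb]
  have h2 : ∀ z : Cn 2, minkC z z = 0 →
      minkR (reP z) (reP z) = 0 ∧ minkR (imP z) (imP z) = 0 := by
    intro z hz
    have hsq : z 0 * z 0 = z 1 * z 1 := by
      have : minkC z z = z 0 * z 0 - z 1 * z 1 := by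
        simp only [minkC, Fin.sum_univ_two]; ring
      rw [this] at hz
      linear_combination hz
    have : (z 0 - z 1) * (z 0 + z 1) = 0 := by ring_nf; linear_combination hsq
    rcases mul_eq_zero.1 this with h | h
    · have he : z 0 = z 1 := by linear_combination h
      constructor <;> · simp only [minkR, reP, imP, PiLp.toLp_apply, Fin.sum_univ_two, he]; ring
    · have he : z 0 = - z 1 := by linear_combination h
      constructor <;> · simp only [minkR, reP, imP, PiLp.toLp_apply, Fin.sum_univ_two, he, Complex.neg_re,
        Complex.neg_im]; ring
  refine ⟨h1, h2, ?_⟩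
  intro z hz hzero
  have key : minkR (reP z) (reP z) = 0 ∧ minkR (imP z) (imP z) = 0 := h2 z hzero
  rcases hz with ((hz | hz) | hz) | hz
  · -- tildeSet V_m^+
    obtain ⟨x, hxB, hxz⟩ := by simpa only [tildeSet, mem_iUnion, mem_setOf_eq] using hz
    have hnot : reP z ∉ {x : Rn 2 | m ^ 2 < minkR x x ∧ 0 < x 0} := by
      intro ⟨ha, _⟩
      rw [key.1] at ha
      nlinarith
    have hle : infDist x (frontier {x : Rn 2 | m ^ 2 < minkR x x ∧ 0 < x 0}) ≤ dist x (reP z) :=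
      infDist_frontier_le_dist hxB hnot
    have hle2 : dist x (reP z) ≤ dist z (emb x) := by
      rw [dist_comm]; exact dist_reP_le z x
    have hnn : (0:ℝ) ≤ infDist x (frontier {x : Rn 2 | m ^ 2 < minkR x x ∧ 0 < x 0}) :=
      infDist_nonneg
    linarith
  · -- tildeSet R
    obtain ⟨x, hxB, hxz⟩ := by simpa only [tildeSet, mem_iUnion, mem_setOf_eq] using hz
    have hnot : reP z ∉ {x : Rn 2 | minkR x x < 0} := by
      intro ha
      rw [mem_setOf_eq, key.1] at ha
      exact lt_irrefl 0 ha
    have hle : infDist x (frontier {x : Rn 2 | minkR x x < 0}) ≤ dist x (reP z) :=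
      infDist_frontier_le_dist hxB hnot
    have hle2 : dist x (reP z) ≤ dist z (emb x) := by
      rw [dist_comm]; exact dist_reP_le z x
    have hnn : (0:ℝ) ≤ infDist x (frontier {x : Rn 2 | minkR x x < 0}) := infDist_nonneg
    linarith
  · -- Tplus
    exact absurd key.2 (ne_of_gt hz.1)
  · -- Tminus
    have hzero' : minkC (-z) (-z) = 0 := by
      have : minkC (-z) (-z) = minkC z z := by
        simp only [minkC, Fin.sum_univ_two]
        simp [PiLp.neg_apply]
      rw [this]; exact hzero
    have key' := (h2 (-z) hzero').2
    exact absurd key' (ne_of_gt hz.1)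
end
end
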